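/- Let X and Y be independent random variables, each uniformly distributed on [0,1]. For every Borel set D ⊆ ℝ, P( (X < Y and min(X,Y) ∈ D) or (Y < X and min(X,Y) ∉ D) ) = 1/2. -/

import Mathlib

/-!
The swap `(x, y) ↦ (y, x)` preserves the product measure and maps `{x < y, x ∉ D}` onto
`{y < x, min x y ∉ D}`, so the event has the same probability as `{x < y}`, whatever `D` is.
By the same symmetry, and since the diagonal is null for an atomless law, `P(x < y) = 1/2`.
-/

open MeasureTheory Set

noncomputable def unif (a b : ℝ) : Measure ℝ :=
  (volume (Set.Icc a b))⁻¹ • volume.restrict (Set.Icc a b)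

instance (a b : ℝ) : SFinite (unif a b) := by unfold unif; infer_instance

namespace MeasureTheory.Measure

variable {α : Type*} [MeasurableSpace α]

instance smul.instNullSingletonClass (c : ENNReal) (μ : Measure α) [NullSingletonClass μ] :
    NullSingletonClass (c • μ) :=
  ⟨fun x => by rw [smul_apply, measure_singleton, smul_zero]⟩

theorem prod_diagonal_eq_zero [MeasurableEq α] (μ ν : Measure α) [SFinite ν]
    [NullSingletonClass ν] : μ.prod ν (diagonal α) = 0 := by
  have hsection (x : α) : Prod.mk x ⁻¹' diagonal α = {x} := by ext; simp [eq_comm]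
  simp [prod_apply measurableSet_diagonal, hsection]

theorem prod_self_swap_preimage (μ : Measure α) [SFinite μ] {s : Set (α × α)}
    (hs : MeasurableSet s) : μ.prod μ (Prod.swap ⁻¹' s) = μ.prod μ s :=
  measurePreserving_swap.measure_preimage hs.nullMeasurableSet

section LinearOrder

variable [LinearOrder α] [TopologicalSpace α] [OrderClosedTopology α]
  [SecondCountableTopology α] [OpensMeasurableSpace α] (μ : Measure α)

theorem prod_self_lt_eq_half [IsProbabilityMeasure μ] [NullSingletonClass μ] :
    μ.prod μ {p | p.1 < p.2} = 1 / 2 := by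
  set lt : Set (α × α) := {p | p.1 < p.2}
  have hlt : MeasurableSet lt := measurableSet_lt measurable_fst measurable_snd
  have hcompl : ltᶜ = Prod.swap ⁻¹' lt ∪ diagonal α := by
    ext p; simp [lt, le_iff_lt_or_eq, eq_comm]
  have hgt : μ.prod μ ltᶜ = μ.prod μ lt := by
    rw [hcompl, measure_congr (union_ae_eq_left_of_ae_eq_empty
      (ae_eq_empty.mpr (prod_diagonal_eq_zero μ μ))), prod_self_swap_preimage μ hlt]
  have htotal := measure_add_measure_compl (μ := μ.prod μ) hlt
  rw [hgt, measure_univ, ← two_mul] at htotal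
  rw [ENNReal.eq_div_iff two_ne_zero ENNReal.ofNat_ne_top, htotal]

theorem prod_self_lt_and_min_mem_or_gt_and_min_notMem [SFinite μ] {D : Set α}
    (hD : MeasurableSet D) :
    μ.prod μ {p | (p.1 < p.2 ∧ min p.1 p.2 ∈ D) ∨ (p.2 < p.1 ∧ min p.1 p.2 ∉ D)} =
      μ.prod μ {p | p.1 < p.2} := by
  set lt : Set (α × α) := {p | p.1 < p.2}
  set inD : Set (α × α) := {p | p.1 < p.2 ∧ p.1 ∈ D}
  set outD : Set (α × α) := {p | p.1 < p.2 ∧ p.1 ∉ D}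
  have hout : MeasurableSet outD :=
    (measurableSet_lt measurable_fst measurable_snd).inter (hD.compl.preimage measurable_fst)
  have hsplit :
      {p : α × α | (p.1 < p.2 ∧ min p.1 p.2 ∈ D) ∨ (p.2 < p.1 ∧ min p.1 p.2 ∉ D)} =
        inD ∪ Prod.swap ⁻¹' outD := by
    ext p
    rcases lt_trichotomy p.1 p.2 with h | h | h <;> simp [inD, outD, h, h.le, not_lt_of_gt]
  have hdisj : Disjoint inD (Prod.swap ⁻¹' outD) :=
    disjoint_left.mpr fun p hp hq => lt_asymm hp.1 hq.1
  have hdisj' : Disjoint inD outD := disjoint_left.mpr fun p hp hq => hq.2 hp.2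
  have hunion : inD ∪ outD = lt := by
    ext p; simp only [inD, outD, lt, mem_union, mem_ofPred_eq]; tauto
  rw [hsplit, measure_union hdisj (hout.preimage measurable_swap), prod_self_swap_preimage μ hout,
    ← measure_union hdisj' hout, hunion]

end LinearOrder

end MeasureTheory.Measure

theorem isProbabilityMeasure_unif {a b : ℝ} (hab : a < b) : IsProbabilityMeasure (unif a b) :=
  ⟨by
    have hvol : volume (Icc a b) ≠ 0 := by simp [Real.volume_Icc, hab]
    rw [unif, Measure.smul_apply, Measure.restrict_apply_univ, smul_eq_mul,
      ENNReal.inv_mul_cancel hvol measure_Icc_lt_top.ne]⟩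

instance (a b : ℝ) : NullSingletonClass (unif a b) := by unfold unif; infer_instance

/-- Let `X` and `Y` be independent, each `Uni(0,1)` (modelled by the product measure,
with `p = (x, y)`).  For every Borel set `D ⊆ ℝ`,
`P((X < Y ∧ min X Y ∈ D) ∨ (Y < X ∧ min X Y ∉ D)) = 1/2`. -/
theorem stmt_11 (D : Set ℝ) (hD : MeasurableSet D) :
    ((unif 0 1).prod (unif 0 1))
        {p : ℝ × ℝ |
          (p.1 < p.2 ∧ min p.1 p.2 ∈ D) ∨ (p.2 < p.1 ∧ min p.1 p.2 ∉ D)} = 1/2 := by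
  have := isProbabilityMeasure_unif (zero_lt_one' ℝ)
  rw [Measure.prod_self_lt_and_min_mem_or_gt_and_min_notMem _ hD, Measure.prod_self_lt_eq_half]
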